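/- Let φ be a state on R⟨x₁,…,x_d⟩ that admits some monic orthogonal polynomial system. Then the polynomials {P_u} defined recursively by the modified Gram–Schmidt formula P_u = x_u − Σ_{v: |v|<|u|, ‖P_v‖≠0} (⟨x_u,P_v⟩/‖P_v‖²) P_v form a monic orthogonal polynomial system for φ. -/

import Mathlib

noncomputable section
open scoped Classical

abbrev NCPoly (d : ℕ) := FreeAlgebra ℝ (Fin d)

/-- The monomial x_u = x_{u(1)} ⋯ x_{u(k)}. -/
def Xmon {d : ℕ} (u : List (Fin d)) : NCPoly d := (u.map (FreeAlgebra.ι ℝ)).prod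

/-- A state on ℝ⟨x₁,…,x_d⟩. -/
structure IsState {d : ℕ} (φ : NCPoly d →ₗ[ℝ] ℝ) : Prop where
  unital : φ 1 = 1
  star_comp : ∀ p : NCPoly d, φ (star p) = φ p
  pos : ∀ p : NCPoly d, 0 ≤ φ (star p * p)

def ipS {d : ℕ} (φ : NCPoly d →ₗ[ℝ] ℝ) (p q : NCPoly d) : ℝ := φ (star p * q)

def nrmS {d : ℕ} (φ : NCPoly d →ₗ[ℝ] ℝ) (p : NCPoly d) : ℝ := Real.sqrt (ipS φ p p)

def IsMonicFamily {d : ℕ} (P : List (Fin d) → NCPoly d) : Prop :=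
  ∀ u, P u - Xmon u ∈
    Submodule.span ℝ {q : NCPoly d | ∃ v : List (Fin d), v.length < u.length ∧ q = Xmon v}

def IsMOPS {d : ℕ} (φ : NCPoly d →ₗ[ℝ] ℝ) (P : List (Fin d) → NCPoly d) : Prop :=
  IsMonicFamily P ∧ ∀ u v, u ≠ v → ipS φ (P u) (P v) = 0

def wordsLen (d : ℕ) : ℕ → Finset (List (Fin d))
  | 0 => {[]}
  | k + 1 => ((Finset.univ : Finset (Fin d)) ×ˢ wordsLen d k).image fun p => p.1 :: p.2

def lowWords (d n : ℕ) : Finset (List (Fin d)) := (Finset.range n).biUnion (wordsLen d)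

/-- Gram-Schmidt recursion. -/
def IsGS {d : ℕ} (φ : NCPoly d →ₗ[ℝ] ℝ) (P : List (Fin d) → NCPoly d) : Prop :=
  ∀ u, P u = Xmon u - ∑ v ∈ (lowWords d u.length).filter (fun v => nrmS φ (P v) ≠ 0),
      (ipS φ (Xmon u) (P v) / (nrmS φ (P v)) ^ 2) • P v

section GSHelpers
variable {d : ℕ} (φ : NCPoly d →ₗ[ℝ] ℝ)

lemma star_smul' (c : ℝ) (a : NCPoly d) : star (c • a) = c • star a := by
  rw [Algebra.smul_def, star_mul, FreeAlgebra.star_algebraMap, ← Algebra.commutes,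
    ← Algebra.smul_def]

lemma ipS_sub_right (p a b : NCPoly d) : ipS φ p (a - b) = ipS φ p a - ipS φ p b := by
  simp [ipS, mul_sub]
lemma ipS_add_right (p a b : NCPoly d) : ipS φ p (a + b) = ipS φ p a + ipS φ p b := by
  simp [ipS, mul_add]
lemma ipS_smul_right (p : NCPoly d) (c : ℝ) (a : NCPoly d) : ipS φ p (c • a) = c * ipS φ p a := by
  simp [ipS, mul_smul_comm]
lemma ipS_sum_right (p : NCPoly d) {ι : Type*} (s : Finset ι) (f : ι → NCPoly d) :
    ipS φ p (∑ i ∈ s, f i) = ∑ i ∈ s, ipS φ p (f i) := by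
  simp [ipS, Finset.mul_sum]
lemma ipS_add_left (a b p : NCPoly d) : ipS φ (a + b) p = ipS φ a p + ipS φ b p := by
  simp [ipS, add_mul]
lemma ipS_sub_left (a b p : NCPoly d) : ipS φ (a - b) p = ipS φ a p - ipS φ b p := by
  simp [ipS, sub_mul]
lemma ipS_smul_left (c : ℝ) (a p : NCPoly d) : ipS φ (c • a) p = c * ipS φ a p := by
  simp [ipS, star_smul', smul_mul_assoc]

lemma ipS_symm (hφ : IsState φ) (p q : NCPoly d) : ipS φ p q = ipS φ q p := by
  have h := hφ.star_comp (star p * q)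
  simpa [ipS, star_mul] using h.symm

lemma ipS_self_nonneg (hφ : IsState φ) (p : NCPoly d) : 0 ≤ ipS φ p p := hφ.pos p

lemma nrm_sq (hφ : IsState φ) (p : NCPoly d) : nrmS φ p ^ 2 = ipS φ p p :=
  Real.sq_sqrt (hφ.pos p)

lemma ipS_eq_zero_of_self (hφ : IsState φ) {p : NCPoly d} (hp : ipS φ p p = 0)
    (q : NCPoly d) : ipS φ q p = 0 := by
  by_contra h
  have key : ∀ t : ℝ, 0 ≤ ipS φ q q + 2 * t * ipS φ q p := by
    intro t
    have h0 := hφ.pos (q + t • p)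
    have he : ipS φ (q + t • p) (q + t • p) = ipS φ q q + 2 * t * ipS φ q p := by
      rw [ipS_add_left, ipS_add_right, ipS_add_right, ipS_smul_left, ipS_smul_left,
        ipS_smul_right, ipS_smul_right, hp, ipS_symm φ hφ p q]
      ring
    have : ipS φ (q + t • p) (q + t • p) = φ (star (q + t • p) * (q + t • p)) := rfl
    linarith [h0, he ▸ (this ▸ h0)]
  have hk := key (-(ipS φ q q + 1) / (2 * ipS φ q p))
  have : ipS φ q q + 2 * (-(ipS φ q q + 1) / (2 * ipS φ q p)) * ipS φ q p = -1 := by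
    field_simp
    ring
  linarith [hk, this ▸ hk]

lemma mem_wordsLen {k : ℕ} {v : List (Fin d)} : v ∈ wordsLen d k ↔ v.length = k := by
  induction k generalizing v with
  | zero => simp [wordsLen, List.length_eq_zero_iff]
  | succ k ih =>
    simp only [wordsLen, Finset.mem_image, Finset.mem_product, Finset.mem_univ, true_and,
      Prod.exists]
    constructor
    · rintro ⟨a, l, hl, rfl⟩
      simp [ih.mp hl]
    · intro h
      cases v with
      | nil => simp at h
      | cons a l => exact ⟨a, l, ih.mpr (by simpa using h), rfl⟩

lemma mem_lowWords {n : ℕ} {v : List (Fin d)} : v ∈ lowWords d n ↔ v.length < n := by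
  simp only [lowWords, Finset.mem_biUnion, Finset.mem_range, mem_wordsLen]
  exact ⟨fun ⟨i, hi, e⟩ => e ▸ hi, fun h => ⟨v.length, h, rfl⟩⟩

def ipLeftMap (p : NCPoly d) : NCPoly d →ₗ[ℝ] ℝ where
  toFun q := ipS φ q p
  map_add' a b := ipS_add_left φ a b p
  map_smul' c a := ipS_smul_left φ c a p

lemma ipS_span_zero {S : Set (NCPoly d)} {p : NCPoly d} (h : ∀ s ∈ S, ipS φ s p = 0) :
    ∀ q ∈ Submodule.span ℝ S, ipS φ q p = 0 := by
  intro q hq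
  have hle : Submodule.span ℝ S ≤ LinearMap.ker (ipLeftMap φ p) :=
    Submodule.span_le.mpr fun s hs => LinearMap.mem_ker.mpr (h s hs)
  exact hle hq

lemma xmon_mem_span {R : List (Fin d) → NCPoly d} (hR : IsMonicFamily R) :
    ∀ n : ℕ, ∀ u : List (Fin d), u.length ≤ n →
      Xmon u ∈ Submodule.span ℝ {q : NCPoly d | ∃ w : List (Fin d), w.length ≤ n ∧ q = R w} := by
  intro n
  induction n with
  | zero =>
    intro u hu
    have hu0 : u = [] := List.length_eq_zero_iff.mp (Nat.le_zero.mp hu)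
    subst hu0
    have h := hR []
    have hempty : {q : NCPoly d | ∃ v : List (Fin d),
        v.length < ([] : List (Fin d)).length ∧ q = Xmon v} = ∅ := by
      ext q; simp
    rw [hempty, Submodule.span_empty, Submodule.mem_bot, sub_eq_zero] at h
    rw [← h]
    exact Submodule.subset_span ⟨[], le_rfl, rfl⟩
  | succ n ih =>
    intro u hu
    have hsub : R u - Xmon u ∈
        Submodule.span ℝ {q : NCPoly d | ∃ w : List (Fin d), w.length ≤ n + 1 ∧ q = R w} := by
      refine Submodule.span_le.mpr ?_ (hR u)
      rintro q ⟨v, hv, rfl⟩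
      have hv' : v.length ≤ n := by omega
      refine Submodule.span_mono ?_ (ih v hv')
      rintro q ⟨w, hw, e⟩
      exact ⟨w, hw.trans (Nat.le_succ n), e⟩
    have hRu : R u ∈
        Submodule.span ℝ {q : NCPoly d | ∃ w : List (Fin d), w.length ≤ n + 1 ∧ q = R w} :=
      Submodule.subset_span ⟨u, hu, rfl⟩
    have := Submodule.sub_mem _ hRu hsub
    simpa using this

end GSHelpers

/-- if a state has some MOPS, then the polynomials produced by the
modified Gram–Schmidt recursion form a MOPS. -/
theorem gram_schmidt_gives_mops {d : ℕ} (φ : NCPoly d →ₗ[ℝ] ℝ) (hφ : IsState φ)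
    (hmops : ∃ Q : List (Fin d) → NCPoly d, IsMOPS φ Q)
    (P : List (Fin d) → NCPoly d) (hGS : IsGS φ P) :
    IsMOPS φ P := by
  obtain ⟨Q, hQmon, hQorth⟩ := hmops
  -- monicity of P
  have monicP : IsMonicFamily P := by
    have key : ∀ n : ℕ, ∀ u : List (Fin d), u.length ≤ n → P u - Xmon u ∈
        Submodule.span ℝ {q : NCPoly d | ∃ v : List (Fin d), v.length < u.length ∧ q = Xmon v} := by
      intro n
      induction n with
      | zero =>
        intro u hu
        have hu0 : u = [] := List.length_eq_zero_iff.mp (Nat.le_zero.mp hu)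
        subst hu0
        rw [hGS []]
        simp [lowWords]
      | succ n ih =>
        intro u hu
        rw [hGS u, sub_sub_cancel_left]
        refine neg_mem (Submodule.sum_mem _ ?_)
        intro w hw
        have hwlen : w.length < u.length := mem_lowWords.mp (Finset.mem_filter.mp hw).1
        refine Submodule.smul_mem _ _ ?_
        have h1 : Xmon w ∈ Submodule.span ℝ
            {q : NCPoly d | ∃ v : List (Fin d), v.length < u.length ∧ q = Xmon v} :=
          Submodule.subset_span ⟨w, hwlen, rfl⟩
        have h2 : P w - Xmon w ∈ Submodule.span ℝ
            {q : NCPoly d | ∃ v : List (Fin d), v.length < u.length ∧ q = Xmon v} := by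
          refine Submodule.span_mono ?_ (ih w (by omega))
          rintro q ⟨v, hv, e⟩
          exact ⟨v, by omega, e⟩
        have := Submodule.add_mem _ h2 h1
        simpa using this
    intro u; exact key u.length u le_rfl
  -- orthogonality
  have orth : ∀ n : ℕ, ∀ u v : List (Fin d), u.length ≤ n → v.length ≤ n → u ≠ v →
      ipS φ (P u) (P v) = 0 := by
    intro n
    induction n with
    | zero =>
      intro u v hu hv huv
      exact absurd ((List.length_eq_zero_iff.mp (Nat.le_zero.mp hu)).trans
        (List.length_eq_zero_iff.mp (Nat.le_zero.mp hv)).symm) huv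
    | succ n ih =>
      have stepA : ∀ u v : List (Fin d), u.length ≤ n + 1 → v.length < u.length →
          ipS φ (P v) (P u) = 0 := by
        intro u v hu hv
        by_cases hz : nrmS φ (P v) = 0
        · rw [ipS_symm φ hφ]
          refine ipS_eq_zero_of_self φ hφ ?_ (P u)
          rw [← nrm_sq φ hφ, hz]; ring
        · rw [hGS u, ipS_sub_right, ipS_sum_right]
          have hvF : v ∈ (lowWords d u.length).filter (fun w => nrmS φ (P w) ≠ 0) :=
            Finset.mem_filter.mpr ⟨mem_lowWords.mpr hv, hz⟩
          rw [Finset.sum_eq_single_of_mem v hvF ?_]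
          · rw [ipS_smul_right, ← nrm_sq φ hφ (P v),
              div_mul_cancel₀ _ (pow_ne_zero 2 hz), ipS_symm φ hφ (P v) (Xmon u), sub_self]
          · intro w hw hwv
            rw [ipS_smul_right]
            have hw' : w.length ≤ n := by
              have := mem_lowWords.mp (Finset.mem_filter.mp hw).1; omega
            rw [ih v w (by omega) hw' (Ne.symm hwv), mul_zero]
      have stepC : ∀ u : List (Fin d), u.length = n + 1 →
          ∀ q ∈ Submodule.span ℝ
            {q : NCPoly d | ∃ w : List (Fin d), w.length ≤ n ∧ q = Xmon w},
          ipS φ q (P u) = 0 := by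
        intro u hu
        refine ipS_span_zero φ ?_
        rintro s ⟨w, hw, rfl⟩
        refine ipS_span_zero φ ?_ (Xmon w) (xmon_mem_span monicP n w hw)
        rintro s ⟨z, hz, rfl⟩
        exact stepA u z (le_of_eq hu) (by omega)
      have stepCQ : ∀ u : List (Fin d), u.length = n + 1 →
          ∀ q ∈ Submodule.span ℝ
            {q : NCPoly d | ∃ w : List (Fin d), w.length ≤ n ∧ q = Xmon w},
          ipS φ q (Q u) = 0 := by
        intro u hu
        refine ipS_span_zero φ ?_
        rintro s ⟨w, hw, rfl⟩
        refine ipS_span_zero φ ?_ (Xmon w) (xmon_mem_span hQmon n w hw)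
        rintro s ⟨z, hz, rfl⟩
        exact hQorth z u (by intro e; rw [e] at hz; omega)
      have hdiff : ∀ R : List (Fin d) → NCPoly d, IsMonicFamily R →
          ∀ u : List (Fin d), u.length = n + 1 → R u - Xmon u ∈ Submodule.span ℝ
            {q : NCPoly d | ∃ w : List (Fin d), w.length ≤ n ∧ q = Xmon w} := by
        intro R hR u hu
        refine Submodule.span_mono ?_ (hR u)
        rintro q ⟨v, hv, e⟩
        exact ⟨v, by omega, e⟩
      intro u v hu hv huv
      rcases Nat.lt_or_ge u.length (n + 1) with hu' | hu'
      · rcases Nat.lt_or_ge v.length (n + 1) with hv' | hv'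
        · exact ih u v (by omega) (by omega) huv
        · exact stepA v u hv (by omega)
      · have huE : u.length = n + 1 := le_antisymm hu hu'
        rcases Nat.lt_or_ge v.length (n + 1) with hv' | hv'
        · rw [ipS_symm φ hφ]
          exact stepA u v hu (by omega)
        · have hvE : v.length = n + 1 := le_antisymm hv hv'
          have m1 : P u - Q u ∈ Submodule.span ℝ
              {q : NCPoly d | ∃ w : List (Fin d), w.length ≤ n ∧ q = Xmon w} := by
            have := Submodule.sub_mem _ (hdiff P monicP u huE) (hdiff Q hQmon u huE)
            simpa using this
          have m2 : P v - Q v ∈ Submodule.span ℝ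
              {q : NCPoly d | ∃ w : List (Fin d), w.length ≤ n ∧ q = Xmon w} := by
            have := Submodule.sub_mem _ (hdiff P monicP v hvE) (hdiff Q hQmon v hvE)
            simpa using this
          have e1 : ipS φ (P u - Q u) (P v) = 0 := stepC v hvE _ m1
          have e2 : ipS φ (P v - Q v) (Q u) = 0 := stepCQ u huE _ m2
          have e3 : ipS φ (Q u) (Q v) = 0 := hQorth u v huv
          have e4 : ipS φ (Q v) (Q u) = 0 := hQorth v u (Ne.symm huv)
          have h1 : ipS φ (P u) (P v) = ipS φ (Q u) (P v) := by
            have := ipS_sub_left φ (P u) (Q u) (P v)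
            linarith [e1, this ▸ e1]
          have h2 : ipS φ (P v) (Q u) = ipS φ (Q v) (Q u) := by
            have := ipS_sub_left φ (P v) (Q v) (Q u)
            linarith [e2, this ▸ e2]
          rw [h1, ipS_symm φ hφ, h2, e4]
  refine ⟨monicP, fun u v huv => orth (max u.length v.length) u v
    (le_max_left _ _) (le_max_right _ _) huv⟩
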